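/- For all integers d ≥ 2 and k > d there exists a constant C = C(d,k) such that for every finite d-degenerate simple graph G on n vertices, any two proper k-colorings of G can be transformed into one another by a sequence of at most C · d^n Kempe changes; in particular K_k(G) has diameter at most C · d^n. -/

import Mathlib

/-- `φ` is a proper `k`-coloring of `G`: adjacent vertices get different colors. -/
def IsProperColoring {V : Type*} (G : SimpleGraph V) (k : ℕ) (φ : V → Fin k) : Prop :=
  ∀ ⦃u v : V⦄, G.Adj u v → φ u ≠ φ v

/-- The spanning subgraph of `G` keeping only edges between vertices colored `a` or `b`:
its connected components meeting the `a/b`-colored vertices are the Kempe chains. -/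
def kempeSub {V : Type*} (G : SimpleGraph V) {k : ℕ} (φ : V → Fin k) (a b : Fin k) :
    SimpleGraph V where
  Adj x y := G.Adj x y ∧ (φ x = a ∨ φ x = b) ∧ (φ y = a ∨ φ y = b)
  symm := ⟨fun x y ⟨h, hx, hy⟩ => ⟨h.symm, hy, hx⟩⟩
  loopless := ⟨fun x h => G.irrefl h.1⟩

/-- `ψ` is obtained from `φ` by a single Kempe change in the pair of colors `{a, b}`:
the colors `a` and `b` are swapped on the Kempe chain containing some vertex `v`
colored `a` or `b`, and all other vertices keep their color. -/
def KempeStepAB {V : Type*} (G : SimpleGraph V) {k : ℕ} (a b : Fin k) (φ ψ : V → Fin k) :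
    Prop :=
  a ≠ b ∧ ∃ v : V, (φ v = a ∨ φ v = b) ∧
    (∀ u : V, (kempeSub G φ a b).Reachable v u → ψ u = Equiv.swap a b (φ u)) ∧
    (∀ u : V, ¬ (kempeSub G φ a b).Reachable v u → ψ u = φ u)

/-- `ψ` is obtained from `φ` by a single Kempe change (in some pair of colors). -/
def KempeStep {V : Type*} (G : SimpleGraph V) (k : ℕ) (φ ψ : V → Fin k) : Prop :=
  ∃ a b : Fin k, KempeStepAB G a b φ ψ

/-- `G` is `d`-degenerate: every (finite, nonempty) subgraph has a vertex of degree
at most `d`, i.e. every finite nonempty vertex subset `S` contains a vertex with at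
most `d` neighbors inside `S`. -/
def Degenerate {V : Type*} (d : ℕ) (G : SimpleGraph V) : Prop :=
  ∀ S : Set V, S.Finite → S.Nonempty → ∃ v ∈ S, {u ∈ S | G.Adj v u}.ncard ≤ d


/-!
A Kempe change of `G - v` lifts to at most two Kempe changes of `G` that agree with it off `v`.
If some color outside the swapped pair `{a, b}` is free at `v`, recolor `v` with it first; then `v`
lies on no `a/b`-chain and the chains of `G` and `G - v` coincide off `v`. Otherwise, since `v`
has at most `d < k` neighbors, every color other than that of `v` occurs exactly once around `v`,
so `v` is a leaf of the `a/b`-subgraph and removing it does not disconnect any chain. Deleting the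
vertices one by one in a degeneracy order, with a final recoloring of each, gives at most
`2 ^ n - 1 ≤ d ^ n` Kempe changes.
-/

namespace SimpleGraph

variable {V : Type*}

lemma Reachable.eq_of_forall_not_adj {G : SimpleGraph V} {u x : V} (hu : ∀ y, ¬ G.Adj u y)
    (h : G.Reachable u x) : x = u := by
  by_contra hne
  obtain ⟨y, hy⟩ := h.nonempty_neighborSet_left (Ne.symm hne)
  exact hu y hy

/-- A walk entering `v` must leave it the way it came, so it can be rerouted around `v`. -/
lemma Reachable.of_neighborSet_subsingleton {G₁ G₂ : SimpleGraph V} {v x y : V}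
    (hv : (G₂.neighborSet v).Subsingleton)
    (hle : ∀ x y, G₂.Adj x y → x ≠ v → y ≠ v → G₁.Adj x y)
    (hx : x ≠ v) (hy : y ≠ v) (h : G₂.Reachable x y) : G₁.Reachable x y := by
  classical
  obtain ⟨w, hw⟩ : ∃ w, ∀ y, G₂.Adj v y → y = w := by
    by_cases hn : ∃ w, G₂.Adj v w
    · obtain ⟨w, hw⟩ := hn
      exact ⟨w, fun y hy => hv hy hw⟩
    · exact ⟨v, fun y hy => absurd ⟨y, hy⟩ hn⟩
  let f := Function.update id v w
  have hf : ∀ a b, G₂.Adj a b → G₁.Reachable (f a) (f b) := by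
    intro a b hab
    by_cases ha : a = v
    · subst ha
      rw [show f a = w from Function.update_self .., show f b = b from
        Function.update_of_ne hab.ne.symm .., hw b hab]
    by_cases hb : b = v
    · subst hb
      rw [show f b = w from Function.update_self .., show f a = a from
        Function.update_of_ne ha .., hw a hab.symm]
    simpa [f, Function.update_of_ne ha, Function.update_of_ne hb] using
      (hle a b hab ha hb).reachable
  have := Relation.ReflTransGen.lift' f
    (fun a b hab => (reachable_iff_reflTransGen _ _).mp (hf a b hab))
    x y ((reachable_iff_reflTransGen _ _).mp h)
  rw [reachable_iff_reflTransGen]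
  simpa [Function.onFun, f, Function.update_of_ne hx, Function.update_of_ne hy] using this

end SimpleGraph

section Kempe

variable {V : Type*} {k : ℕ} {G H : SimpleGraph V} {φ ψ : V → Fin k} {a b : Fin k} {u v : V}

open Classical in
noncomputable def kempeSwap (G : SimpleGraph V) (φ : V → Fin k) (a b : Fin k) (u : V) :
    V → Fin k :=
  fun x => if (kempeSub G φ a b).Reachable u x then Equiv.swap a b (φ x) else φ x

lemma kempeStepAB_iff :
    KempeStepAB G a b φ ψ ↔ a ≠ b ∧ ∃ u, (φ u = a ∨ φ u = b) ∧ ψ = kempeSwap G φ a b u := by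
  constructor
  · rintro ⟨hab, u, hu, hin, hout⟩
    refine ⟨hab, u, hu, funext fun x => ?_⟩
    by_cases hx : (kempeSub G φ a b).Reachable u x
    · rw [hin x hx, kempeSwap, if_pos hx]
    · rw [hout x hx, kempeSwap, if_neg hx]
  · rintro ⟨hab, u, hu, rfl⟩
    exact ⟨hab, u, hu, fun x hx => if_pos hx, fun x hx => if_neg hx⟩

lemma IsProperColoring.anti (hle : H ≤ G) (hφ : IsProperColoring G k φ) :
    IsProperColoring H k φ :=
  fun _ _ h => hφ (hle h)

lemma IsProperColoring.swap_ne_of_reachable_of_not_reachable (hφ : IsProperColoring G k φ)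
    {x y : V} (hxy : G.Adj x y) (hx : (kempeSub G φ a b).Reachable u x)
    (hy : ¬ (kempeSub G φ a b).Reachable u y) : Equiv.swap a b (φ x) ≠ φ y := by
  by_cases hc : φ x = a ∨ φ x = b
  · have hcy : ¬ (φ y = a ∨ φ y = b) := fun hcy =>
      hy (hx.trans (SimpleGraph.Adj.reachable ⟨hxy, hc, hcy⟩))
    rcases hc with hc | hc <;> simp only [hc, Equiv.swap_apply_left, Equiv.swap_apply_right] <;>
      grind
  · rw [not_or] at hc
    rw [Equiv.swap_apply_of_ne_of_ne hc.1 hc.2]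
    exact hφ hxy

lemma IsProperColoring.kempeSwap (hφ : IsProperColoring G k φ) :
    IsProperColoring G k (kempeSwap G φ a b u) := by
  intro x y hxy
  unfold _root_.kempeSwap
  by_cases hx : (kempeSub G φ a b).Reachable u x <;>
    by_cases hy : (kempeSub G φ a b).Reachable u y <;> simp only [hx, hy, if_true, if_false]
  · exact fun h => hφ hxy (Equiv.injective _ h)
  · exact hφ.swap_ne_of_reachable_of_not_reachable hxy hx hy
  · exact (hφ.swap_ne_of_reachable_of_not_reachable hxy.symm hy hx).symm
  · exact hφ hxy

lemma IsProperColoring.of_kempeStep (hφ : IsProperColoring G k φ) (h : KempeStep G k φ ψ) :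
    IsProperColoring G k ψ := by
  obtain ⟨a, b, hab⟩ := h
  obtain ⟨-, u, -, rfl⟩ := kempeStepAB_iff.mp hab
  exact hφ.kempeSwap

lemma kempeStepAB_update [DecidableEq V] {c : Fin k} (hφ : IsProperColoring G k φ)
    (hne : φ v ≠ c) (hfree : ∀ y, G.Adj v y → φ y ≠ c) :
    KempeStepAB G (φ v) c φ (Function.update φ v c) := by
  have hiso : ∀ y, ¬ (kempeSub G φ (φ v) c).Adj v y := by
    rintro y ⟨hadj, -, hy | hy⟩
    · exact hφ hadj hy.symm
    · exact hfree y hadj hy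
  refine kempeStepAB_iff.mpr ⟨hne, v, .inl rfl, funext fun x => ?_⟩
  by_cases hx : x = v
  · subst hx
    simp [_root_.kempeSwap]
  · have hr : ¬ (kempeSub G φ (φ v) c).Reachable v x := fun h => hx (h.eq_of_forall_not_adj hiso)
    rw [Function.update_of_ne hx, _root_.kempeSwap, if_neg hr]

end Kempe

inductive KempeSeq {V : Type*} (G : SimpleGraph V) (k : ℕ) :
    ℕ → (V → Fin k) → (V → Fin k) → Prop
  | refl (φ : V → Fin k) : KempeSeq G k 0 φ φ
  | tail {m : ℕ} {φ ψ χ : V → Fin k} : KempeSeq G k m φ ψ → KempeStep G k ψ χ →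
      KempeSeq G k (m + 1) φ χ

namespace KempeSeq

variable {V : Type*} {k m n : ℕ} {G : SimpleGraph V} {φ ψ χ : V → Fin k}

lemma single (h : KempeStep G k φ ψ) : KempeSeq G k 1 φ ψ :=
  tail (refl φ) h

lemma trans (h₁ : KempeSeq G k m φ ψ) (h₂ : KempeSeq G k n ψ χ) :
    KempeSeq G k (m + n) φ χ := by
  induction h₂ with
  | refl => exact h₁
  | tail _ hstep ih => exact tail (ih h₁) hstep

lemma proper (h : KempeSeq G k m φ ψ) (hφ : IsProperColoring G k φ) : IsProperColoring G k ψ := by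
  induction h with
  | refl => exact hφ
  | tail _ hstep ih => exact (ih hφ).of_kempeStep hstep

lemma exists_seq (h : KempeSeq G k m φ ψ) (hφ : IsProperColoring G k φ) :
    ∃ σ : ℕ → V → Fin k, σ 0 = φ ∧ σ m = ψ ∧ (∀ i ≤ m, IsProperColoring G k (σ i)) ∧
      ∀ i < m, KempeStep G k (σ i) (σ (i + 1)) := by
  induction h with
  | refl φ => exact ⟨fun _ => φ, rfl, rfl, fun _ _ => hφ, fun _ hi => absurd hi (Nat.not_lt_zero _)⟩
  | @tail m φ ψ χ hs hstep ih =>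
    obtain ⟨σ, h0, hm, hproper, hsteps⟩ := ih hφ
    refine ⟨fun i => if i ≤ m then σ i else χ, by simpa using h0, by simp, fun i hi => ?_,
      fun i hi => ?_⟩
    · by_cases him : i ≤ m
      · simpa [him] using hproper i him
      · simpa [him] using (hs.proper hφ).of_kempeStep hstep
    · by_cases him : i < m
      · simpa [him.le, Nat.succ_le_of_lt him] using hsteps i him
      · obtain rfl : i = m := by omega
        simpa [hm] using hstep

end KempeSeq

section Lift

open SimpleGraph

variable {V : Type*} {k : ℕ} {H : SimpleGraph V} {σ σ' τ : V → Fin k} {a b : Fin k} {v : V}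

/-- The colors other than `τ v` all occur among the at most `d < k` neighbors of `v`, leaving no
room for two neighbors of the same color. -/
lemma neighborSet_kempeSub_subsingleton [Finite V] {d : ℕ} (hdk : d < k)
    (hdeg : (H.neighborSet v).ncard ≤ d) (hτ : IsProperColoring H k τ)
    (hfull : ∀ c, c ≠ a → c ≠ b → ∃ y, H.Adj v y ∧ τ y = c) :
    ((kempeSub H τ a b).neighborSet v).Subsingleton := by
  rintro y ⟨hvy, hv, hy⟩ z ⟨hvz, -, hz⟩
  by_contra hyz
  have hcover : ({τ v}ᶜ : Set (Fin k)) ⊆ τ '' (H.neighborSet v \ {z}) := by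
    intro c hc
    have hcv : c ≠ τ v := hc
    by_cases hcab : c = a ∨ c = b
    · refine ⟨y, ⟨hvy, hyz⟩, ?_⟩
      have := hτ hvy
      grind
    · obtain ⟨x, hvx, hx⟩ := hfull c (fun h => hcab (.inl h)) (fun h => hcab (.inr h))
      refine ⟨x, ⟨hvx, ?_⟩, hx⟩
      rintro rfl
      grind
  have hcard := (Set.ncard_le_ncard hcover).trans Set.ncard_image_le
  rw [Set.ncard_compl, Set.ncard_singleton, Nat.card_eq_fintype_card, Fintype.card_fin] at hcard
  have := Set.ncard_sdiff_singleton_add_one (s := H.neighborSet v) hvz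
  omega

lemma kempeSwap_eq_kempeSwap_deleteIncidenceSet {u x : V} (hagree : ∀ x ≠ v, τ x = σ x)
    (hleaf : ((kempeSub H τ a b).neighborSet v).Subsingleton) (hu : u ≠ v) (hx : x ≠ v) :
    kempeSwap H τ a b u x = kempeSwap (H.deleteIncidenceSet v) σ a b u x := by
  classical
  have hreach : (kempeSub H τ a b).Reachable u x ↔
      (kempeSub (H.deleteIncidenceSet v) σ a b).Reachable u x := by
    constructor
    · refine Reachable.of_neighborSet_subsingleton hleaf ?_ hu hx
      rintro y z ⟨hyz, hy, hz⟩ hyv hzv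
      exact ⟨deleteIncidenceSet_adj.mpr ⟨hyz, hyv, hzv⟩, hagree y hyv ▸ hy, hagree z hzv ▸ hz⟩
    · refine Reachable.mono ?_
      rintro y z ⟨hyz, hy, hz⟩
      obtain ⟨hyz, hyv, hzv⟩ := deleteIncidenceSet_adj.mp hyz
      exact ⟨hyz, (hagree y hyv).symm ▸ hy, (hagree z hzv).symm ▸ hz⟩
  simp only [kempeSwap, hagree x hx]
  exact if_congr hreach rfl rfl

lemma KempeStepAB.lift_deleteIncidenceSet [Finite V] {d : ℕ} (hdk : d < k)
    (hdeg : (H.neighborSet v).ncard ≤ d) (hτ : IsProperColoring H k τ)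
    (hagree : ∀ x ≠ v, τ x = σ x) (h : KempeStepAB (H.deleteIncidenceSet v) a b σ σ') :
    ∃ m ≤ 2, ∃ τ', KempeSeq H k m τ τ' ∧ ∀ x ≠ v, τ' x = σ' x := by
  classical
  obtain ⟨hab, u, hu, rfl⟩ := kempeStepAB_iff.mp h
  by_cases huv : u = v
  · subst huv
    refine ⟨0, by omega, τ, .refl τ, fun x hx => ?_⟩
    have hiso : ∀ y, ¬ (kempeSub (H.deleteIncidenceSet u) σ a b).Adj u y :=
      fun y hy => (deleteIncidenceSet_adj.mp hy.1).2.1 rfl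
    have hr : ¬ (kempeSub (H.deleteIncidenceSet u) σ a b).Reachable u x := fun hr =>
      hx (hr.eq_of_forall_not_adj hiso)
    rw [kempeSwap, if_neg hr, hagree x hx]
  have hlift : ∀ τ₀ : V → Fin k, (∀ x ≠ v, τ₀ x = σ x) →
      ((kempeSub H τ₀ a b).neighborSet v).Subsingleton → ∃ τ', KempeSeq H k 1 τ₀ τ' ∧
        ∀ x ≠ v, τ' x = kempeSwap (H.deleteIncidenceSet v) σ a b u x :=
    fun τ₀ hag hleaf => ⟨kempeSwap H τ₀ a b u,
      .single ⟨a, b, kempeStepAB_iff.mpr ⟨hab, u, (hag u huv).symm ▸ hu, rfl⟩⟩,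
      fun x hx => kempeSwap_eq_kempeSwap_deleteIncidenceSet hag hleaf huv hx⟩
  by_cases hleaf : ((kempeSub H τ a b).neighborSet v).Subsingleton
  · obtain ⟨τ', hs, hτ'⟩ := hlift τ hagree hleaf
    exact ⟨1, by omega, τ', hs, hτ'⟩
  -- otherwise some color `c ∉ {a, b}` is free at `v`: recolor `v` with it first
  obtain ⟨c, hca, hcb, hc⟩ : ∃ c, c ≠ a ∧ c ≠ b ∧ ∀ y, H.Adj v y → τ y ≠ c := by
    by_contra hfull
    push Not at hfull
    exact hleaf (neighborSet_kempeSub_subsingleton hdk hdeg hτ hfull)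
  obtain ⟨y, ⟨-, hvab, -⟩, -⟩ := Set.not_subsingleton_iff.mp hleaf
  have hvc : τ v ≠ c := by grind
  have hleaf₁ : ((kempeSub H (Function.update τ v c) a b).neighborSet v).Subsingleton := by
    rintro y ⟨-, hv, -⟩
    simp only [Function.update_self] at hv
    grind
  obtain ⟨τ', hs, hτ'⟩ := hlift (Function.update τ v c)
    (fun x hx => (Function.update_of_ne hx ..).trans (hagree x hx)) hleaf₁
  exact ⟨2, le_rfl, τ', (KempeSeq.single ⟨_, _, kempeStepAB_update hτ hvc hc⟩).trans hs, hτ'⟩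

lemma KempeSeq.lift_deleteIncidenceSet [Finite V] {d m : ℕ} (hdk : d < k)
    (hdeg : (H.neighborSet v).ncard ≤ d) (h : KempeSeq (H.deleteIncidenceSet v) k m σ σ')
    (hτ : IsProperColoring H k τ) (hagree : ∀ x ≠ v, τ x = σ x) :
    ∃ m' ≤ 2 * m, ∃ τ', KempeSeq H k m' τ τ' ∧ ∀ x ≠ v, τ' x = σ' x := by
  induction h with
  | refl => exact ⟨0, by omega, τ, .refl τ, hagree⟩
  | tail _ hstep ih =>
    obtain ⟨m₁, hm₁, τ₁, hs₁, hag₁⟩ := ih hagree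
    obtain ⟨a, b, hab⟩ := hstep
    obtain ⟨m₂, hm₂, τ₂, hs₂, hag₂⟩ := hab.lift_deleteIncidenceSet hdk hdeg (hs₁.proper hτ) hag₁
    exact ⟨m₁ + m₂, by omega, τ₂, hs₁.trans hs₂, hag₂⟩

end Lift

lemma Degenerate.anti {V : Type*} {d : ℕ} {G H : SimpleGraph V} (hle : H ≤ G)
    (hG : Degenerate d G) : Degenerate d H := by
  intro S hS hne
  obtain ⟨v, hv, hdeg⟩ := hG S hS hne
  refine ⟨v, hv, (Set.ncard_le_ncard ?_ (hS.subset (Set.sep_subset _ _))).trans hdeg⟩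
  exact fun u hu => ⟨hu.1, hle hu.2⟩

namespace KempeSeq

variable {V : Type*} {k : ℕ} {H : SimpleGraph V} {α β : V → Fin k}

lemma exists_of_forall_ne_eq {v : V} (hα : IsProperColoring H k α)
    (hβ : IsProperColoring H k β) (h : ∀ x ≠ v, α x = β x) : ∃ m ≤ 1, KempeSeq H k m α β := by
  classical
  by_cases hv : α v = β v
  · obtain rfl : α = β := funext fun x => if hx : x = v then hx ▸ hv else h x hx
    exact ⟨0, zero_le_one, .refl α⟩
  have hupd : Function.update α v (β v) = β := by
    ext x
    by_cases hx : x = v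
    · rw [hx, Function.update_self]
    · rw [Function.update_of_ne hx, h x hx]
  have hfree : ∀ y, H.Adj v y → α y ≠ β v := fun y hy => h y hy.ne.symm ▸ hβ hy.symm
  exact ⟨1, le_rfl, .single ⟨_, _, hupd ▸ kempeStepAB_update hα hv hfree⟩⟩

lemma exists_of_degenerate [Finite V] {d : ℕ} (hdk : d < k) (S : Finset V)
    (hS : ∀ x y, H.Adj x y → x ∈ S) (hH : Degenerate d H) (hα : IsProperColoring H k α)
    (hβ : IsProperColoring H k β) (hαβ : ∀ x ∉ S, α x = β x) :
    ∃ m ≤ 2 ^ S.card - 1, KempeSeq H k m α β := by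
  classical
  induction S using Finset.strongInduction generalizing H α β with
  | H S ih =>
  rcases S.eq_empty_or_nonempty with rfl | hne
  · obtain rfl : α = β := funext fun x => hαβ x (Finset.notMem_empty x)
    exact ⟨0, Nat.zero_le _, .refl α⟩
  obtain ⟨v, hvS, hvdeg⟩ := hH S S.finite_toSet (by exact_mod_cast hne)
  have hdeg : (H.neighborSet v).ncard ≤ d := by
    convert hvdeg using 2
    ext u
    exact ⟨fun h => ⟨hS u v h.symm, h⟩, And.right⟩
  have hsub : ∀ x y, (H.deleteIncidenceSet v).Adj x y → x ∈ S.erase v := by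
    intro x y hxy
    obtain ⟨hxy, hxv, -⟩ := SimpleGraph.deleteIncidenceSet_adj.mp hxy
    exact Finset.mem_erase.mpr ⟨hxv, hS x y hxy⟩
  have hβ' : IsProperColoring (H.deleteIncidenceSet v) k (Function.update β v (α v)) := by
    intro x y hxy
    obtain ⟨hxy, hxv, hyv⟩ := SimpleGraph.deleteIncidenceSet_adj.mp hxy
    simpa [Function.update_of_ne hxv, Function.update_of_ne hyv] using hβ hxy
  have hαβ' : ∀ x ∉ S.erase v, α x = Function.update β v (α v) x := by
    intro x hx
    by_cases hxv : x = v
    · rw [hxv, Function.update_self]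
    · rw [Function.update_of_ne hxv]
      exact hαβ x fun hxS => hx (Finset.mem_erase.mpr ⟨hxv, hxS⟩)
  obtain ⟨m₁, hm₁, hs₁⟩ := ih _ (S.erase_ssubset hvS) hsub
    (hH.anti (H.deleteIncidenceSet_le v)) (hα.anti (H.deleteIncidenceSet_le v)) hβ' hαβ'
  obtain ⟨m₂, hm₂, τ, hs₂, hτ⟩ := hs₁.lift_deleteIncidenceSet hdk hdeg hα fun _ _ => rfl
  obtain ⟨m₃, hm₃, hs₃⟩ := exists_of_forall_ne_eq (hs₂.proper hα) hβ
    fun x hx => (hτ x hx).trans (Function.update_of_ne hx ..)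
  refine ⟨m₂ + m₃, ?_, hs₂.trans hs₃⟩
  have hcard := Finset.card_erase_add_one hvS
  have hpow : 2 ^ S.card = 2 * 2 ^ (S.erase v).card := by rw [← hcard, pow_succ]; ring
  have := (S.erase v).card.one_le_two_pow
  omega

end KempeSeq

/-- For all `d ≥ 2` and `k > d` there is a constant `C = C(d, k)` such
that for every finite `d`-degenerate graph `G` on `n` vertices, any two proper
`k`-colorings of `G` are joined by a sequence of at most `C * d ^ n` Kempe changes. -/
theorem kempe_diameter_exponential (d k : ℕ) (hd : 2 ≤ d) (hk : d < k) :
    ∃ C : ℕ, ∀ (V : Type) [Fintype V], ∀ G : SimpleGraph V, Degenerate d G →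
      ∀ α β : V → Fin k, IsProperColoring G k α → IsProperColoring G k β →
        ∃ (m : ℕ) (σ : ℕ → V → Fin k), m ≤ C * d ^ (Fintype.card V) ∧
          σ 0 = α ∧ σ m = β ∧
          (∀ i ≤ m, IsProperColoring G k (σ i)) ∧
          (∀ i < m, KempeStep G k (σ i) (σ (i + 1))) := by
  refine ⟨1, fun V _ G hG α β hα hβ => ?_⟩
  obtain ⟨m, hm, hs⟩ := KempeSeq.exists_of_degenerate hk Finset.univ
    (fun x _ _ => Finset.mem_univ x) hG hα hβ (fun x hx => absurd (Finset.mem_univ x) hx)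
  obtain ⟨σ, h0, hσm, hproper, hsteps⟩ := hs.exists_seq hα
  have hpow : 2 ^ Fintype.card V ≤ d ^ Fintype.card V := Nat.pow_le_pow_left hd _
  exact ⟨m, σ, by rw [Finset.card_univ] at hm; omega, h0, hσm, hproper, hsteps⟩
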